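/- Let D = (c_1,…,c_n) be a p-monotone Ferrers diagram of order n = p^m, and let B = (β_1,…,β_n) be an F-basis of L such that span_F(β_1,…,β_i) = F_i for every i ∈ {1,…,n} (an F-compatible basis). Let L[σ;D] = {Σ_{i=1}^n λ_i·σ̄^{i−1} : λ_i ∈ F_{c_i}} ⊆ End_F(L). Then the F-linear map sending f ∈ L[σ;D] to its matrix with respect to B (whose j-th column records the coordinates of f(β_j) in the basis B) is an F-linear isomorphism from L[σ;D] onto F^D. -/

import Mathlib

/-- A Ferrers diagram of order `n`, given by its column heights
`c 0 ≤ c 1 ≤ … ≤ c (n-1) ≤ n` (so `c j` is the number of dots in the (j+1)-st column). -/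
def IsFerrersDiagram (n : ℕ) (c : Fin n → ℕ) : Prop :=
  Monotone c ∧ ∀ i, c i ≤ n

/-- Extension of the column-height function to `ℕ`, by zero. -/
def colExt (n : ℕ) (c : Fin n → ℕ) : ℕ → ℕ :=
  fun k => if h : k < n then c ⟨k, h⟩ else 0

/-- `ν_j(D,d) = Σ_{i=1}^{n-j} max{0, c_i - d + 1 + j}` (truncated subtraction gives the max). -/
def nuJ (n d j : ℕ) (c : Fin n → ℕ) : ℕ :=
  ∑ i ∈ Finset.range (n - j), (colExt n c i + 1 + j - d)

/-- `ν_min(D,d) = min{ν_j(D,d) : 0 ≤ j ≤ d-1}`. -/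
noncomputable def nuMin (n d : ℕ) (c : Fin n → ℕ) : ℕ :=
  sInf {k | ∃ j < d, k = nuJ n d j c}

/-- A Ferrers diagram is monotone if `c (i+1) > c i` whenever `0 < c i < n`. -/
def DiagMonotone (n : ℕ) (c : Fin n → ℕ) : Prop :=
  ∀ i : Fin n, ∀ hi : (i : ℕ) + 1 < n, 0 < c i → c i < n → c i < c ⟨(i : ℕ) + 1, hi⟩

/-- A Ferrers diagram is convex if `c (i+1) - c i ≤ 1` for all `i`. -/
def DiagConvex (n : ℕ) (c : Fin n → ℕ) : Prop :=
  ∀ i : Fin n, ∀ hi : (i : ℕ) + 1 < n, c ⟨(i : ℕ) + 1, hi⟩ ≤ c i + 1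

/-- A Ferrers diagram is strictly monotone if `c (i+1) > c i` whenever `c i > 0`. -/
def DiagStrictlyMonotone (n : ℕ) (c : Fin n → ℕ) : Prop :=
  ∀ i : Fin n, ∀ hi : (i : ℕ) + 1 < n, 0 < c i → c i < c ⟨(i : ℕ) + 1, hi⟩

/-- A Ferrers diagram is initially convex if `c 1 ≤ 1` and `c (i+1) - c i ≤ 1` for all `i`. -/
def DiagInitiallyConvex (n : ℕ) (c : Fin n → ℕ) : Prop :=
  (∀ h : 0 < n, c ⟨0, h⟩ ≤ 1) ∧ DiagConvex n c

/-- `h` is an admissible `p`-height for the Ferrers diagram `c`: `p^h ∣ n`, `p^h ∣ c i` for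
all `i`, and `c (n-r) = c (n-s)` (1-indexed) whenever `r, s` lie in the same block
`{Q p^h, …, (Q+1) p^h - 1}`. -/
def HeightOK (p n h : ℕ) (c : Fin n → ℕ) : Prop :=
  p ^ h ∣ n ∧ (∀ i, p ^ h ∣ c i) ∧
    ∀ r s : Fin n, (r : ℕ) / p ^ h = (s : ℕ) / p ^ h →
      c ⟨n - 1 - (r : ℕ), by have := r.isLt; omega⟩ =
        c ⟨n - 1 - (s : ℕ), by have := s.isLt; omega⟩

/-- The `p`-height of a Ferrers diagram: the largest admissible `h`. -/
noncomputable def pHeight (p n : ℕ) (c : Fin n → ℕ) : ℕ :=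
  sSup {h | HeightOK p n h c}

/-- The `p`-contraction of a Ferrers diagram: `c'_i = c_{p^h i} / p^h` (1-indexed),
a diagram of order `n / p^h`, where `h` is the `p`-height. -/
noncomputable def pContraction (p n : ℕ) (c : Fin n → ℕ) :
    Fin (n / p ^ pHeight p n c) → ℕ :=
  fun i => colExt n c (p ^ pHeight p n c * ((i : ℕ) + 1) - 1) / p ^ pHeight p n c

/-- A Ferrers diagram is `p`-monotone if its `p`-contraction is monotone. -/
def IsPMonotone (p n : ℕ) (c : Fin n → ℕ) : Prop :=
  DiagMonotone (n / p ^ pHeight p n c) (pContraction p n c)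

/-- A Ferrers diagram is `p`-convex if its `p`-contraction is convex. -/
def IsPConvex (p n : ℕ) (c : Fin n → ℕ) : Prop :=
  DiagConvex (n / p ^ pHeight p n c) (pContraction p n c)

/-- A Ferrers diagram is strictly `p`-monotone if its `p`-contraction is strictly monotone. -/
def IsStrictlyPMonotone (p n : ℕ) (c : Fin n → ℕ) : Prop :=
  DiagStrictlyMonotone (n / p ^ pHeight p n c) (pContraction p n c)

/-- A Ferrers diagram is initially `p`-convex if its `p`-contraction is initially convex. -/
def IsInitiallyPConvex (p n : ℕ) (c : Fin n → ℕ) : Prop :=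
  DiagInitiallyConvex (n / p ^ pHeight p n c) (pContraction p n c)

/-- The adjoint Ferrers diagram: column `j+1` of `D^⊤` has `#{i : c i ≥ n - j}` dots. -/
def adjointDiag (n : ℕ) (c : Fin n → ℕ) : Fin n → ℕ :=
  fun j => (Finset.univ.filter (fun i : Fin n => n - (j : ℕ) ≤ c i)).card

/-- `|D ∩ Δ_{i+1}^n|`: the number of dots of `D` on the (i+1)-st diagonal (0-indexed `i`). -/
def diagDots (n : ℕ) (c : Fin n → ℕ) (i : ℕ) : ℕ :=
  ((Finset.range n).filter (fun r => r + i < n ∧ r < colExt n c (r + i))).card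

/-- The pair `(D, d)` is MDS-constructible if
`ν_min(D,d) = Σ_{i=1}^n max{0, |D ∩ Δ_i^n| - d + 1}`. -/
def IsMDSConstructibleP (n d : ℕ) (c : Fin n → ℕ) : Prop :=
  nuMin n d c = ∑ i ∈ Finset.range n, (diagDots n c i + 1 - d)

/-- `σ̄ = σ - id`, as an `F`-linear endomorphism of `L`. -/
def sbar {F L : Type*} [Field F] [Field L] [Algebra F L] (σ : L ≃ₐ[F] L) :
    L →ₗ[F] L :=
  σ.toLinearMap - LinearMap.id

/-!
Let `K k = ker σ̄^k`. The Leibniz rule `σ̄(xy) = σ(x) σ̄(y) + σ̄(x) y` gives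
`K (a+1) * K (b+1) ⊆ K (a+b+1)`; since `σ̄^(p^h) = σ^(p^h) - 1` in characteristic `p`, the same
rule for `σ^(p^h)` gives `K (p^h(a+1)) * K (p^h(b+1)) ⊆ K (p^h(a+b+1))`. With `h` the `p`-height,
`p`-monotonicity makes `c` grow by at least `p^h` per block of `p^h` columns, which is exactly
what is needed for `λ_i σ̄^i β_j ∈ K (c i) * K (j+1-i) ⊆ K (c j)`. Hence every `f ∈ L[σ;D]`
maps `β_j` into `K (c j)`, i.e. its matrix lies in `F^D`.

Conversely, `λ ↦ ∑ λ_i σ̄^i` is injective (evaluate at `β_i` for the least `i` with `λ_i ≠ 0`),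
so `L[σ;D]` and `{f | ∀ j, f β_j ∈ K (c j)}`, both injective images of `∏ i, K (c i)`, have the
same dimension; the inclusion is therefore an equality.
-/

open Module Submodule

section FerrersDiagram

variable {p n : ℕ} {c : Fin n → ℕ}

lemma Nat.mul_sub_one_sub_div {P N a : ℕ} (hP : 0 < P) (ha : a < P * N) :
    (P * N - 1 - a) / P = N - 1 - a / P := by
  have hq : a / P < N := (Nat.div_lt_iff_lt_mul hP).2 (by rwa [mul_comm])
  obtain ⟨t, rfl⟩ : ∃ t, N = a / P + 1 + t := ⟨N - a / P - 1, by omega⟩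
  have hmod := Nat.div_add_mod a P
  have hlt := Nat.mod_lt a hP
  have hexp : P * (a / P + 1 + t) = P * (a / P) + P + t * P := by ring
  rw [show a / P + 1 + t - 1 - a / P = t by omega]
  exact Nat.div_eq_of_lt_le (by omega) (by rw [add_mul]; omega)

lemma Nat.mul_div_add_one_sub_one_div {P q : ℕ} (hP : 0 < P) : (P * (q + 1) - 1) / P = q := by
  have hexp : P * (q + 1) = q * P + P := by ring
  exact Nat.div_eq_of_lt_le (by omega) (by rw [add_mul]; omega)

lemma Nat.add_one_sub_le_mul_div_sub_div {P i j : ℕ} (hP : 0 < P) (hij : i ≤ j) :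
    j + 1 - i ≤ P * (j / P - i / P + 1) := by
  obtain ⟨d, hd⟩ : ∃ d, j / P = i / P + d := ⟨j / P - i / P, by
    have := Nat.div_le_div_right (c := P) hij; omega⟩
  have hexp : P * (j / P) = P * (i / P) + P * d := by rw [hd, mul_add]
  have := Nat.div_add_mod i P
  have := Nat.div_add_mod j P
  have := Nat.mod_lt j hP
  rw [hd, Nat.add_sub_cancel_left, mul_add_one]
  omega

lemma heightOK_pHeight (hp : 1 < p) (hn : 0 < n) : HeightOK p n (pHeight p n c) c := by
  have hzero : HeightOK p n 0 c := ⟨one_dvd n, fun _ => one_dvd _, fun r s hrs => by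
    obtain rfl : r = s := Fin.ext (by simpa using hrs)
    rfl⟩
  refine Nat.sSup_mem (s := {h | HeightOK p n h c}) ⟨0, hzero⟩ (bddAbove_def.2 ⟨n, fun h hh => ?_⟩)
  exact (Nat.lt_pow_self hp).le.trans (Nat.le_of_dvd hn hh.1)

lemma HeightOK.apply_eq_of_div_eq {h : ℕ} (hp : 0 < p) (hc : HeightOK p n h c) {i i' : Fin n}
    (hii' : (i : ℕ) / p ^ h = i' / p ^ h) : c i = c i' := by
  obtain ⟨N, hN⟩ := hc.1
  have hP : 0 < p ^ h := pow_pos hp h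
  have hi := i.isLt
  have hi' := i'.isLt
  have key := hc.2.2 ⟨n - 1 - i, by omega⟩ ⟨n - 1 - i', by omega⟩ (by
    simp only [hN]
    rw [Nat.mul_sub_one_sub_div hP (by omega), Nat.mul_sub_one_sub_div hP (by omega), hii'])
  convert key using 2 <;> ext <;> simp only <;> omega

lemma pow_pHeight_mul_add_one_sub_one_lt (hp : 0 < p) (q : Fin (n / p ^ pHeight p n c)) :
    p ^ pHeight p n c * (q + 1) - 1 < n := by
  have := Nat.mul_le_mul_left (p ^ pHeight p n c) (show (q : ℕ) + 1 ≤ _ from q.isLt)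
  have := Nat.mul_div_le n (p ^ pHeight p n c)
  have := Nat.mul_pos (pow_pos hp (pHeight p n c)) (show 0 < (q : ℕ) + 1 by omega)
  omega

lemma pContraction_apply (hp : 0 < p) (q : Fin (n / p ^ pHeight p n c)) :
    pContraction p n c q =
      c ⟨_, pow_pHeight_mul_add_one_sub_one_lt hp q⟩ / p ^ pHeight p n c :=
  congrArg (· / _) (dif_pos (pow_pHeight_mul_add_one_sub_one_lt hp q))

lemma div_pow_pHeight_lt (hp : 1 < p) (i : Fin n) :
    (i : ℕ) / p ^ pHeight p n c < n / p ^ pHeight p n c :=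
  Nat.div_lt_div_of_lt_of_dvd (heightOK_pHeight hp i.pos).1 i.isLt

lemma apply_eq_pow_pHeight_mul_pContraction (hp : 1 < p) (i : Fin n) :
    c i = p ^ pHeight p n c *
      pContraction p n c ⟨i / p ^ pHeight p n c, div_pow_pHeight_lt hp i⟩ := by
  have hc := heightOK_pHeight (c := c) hp i.pos
  rw [pContraction_apply (Nat.zero_lt_of_lt hp), hc.apply_eq_of_div_eq
    (i := ⟨_, pow_pHeight_mul_add_one_sub_one_lt (Nat.zero_lt_of_lt hp) _⟩) (i' := i)
    (Nat.zero_lt_of_lt hp) (Nat.mul_div_add_one_sub_one_div (pow_pos (Nat.zero_lt_of_lt hp) _))]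
  exact (Nat.mul_div_cancel' (hc.2.1 i)).symm

lemma pContraction_mono (hp : 0 < p) (hc : Monotone c) : Monotone (pContraction p n c) := by
  intro q q' hqq'
  rw [pContraction_apply hp, pContraction_apply hp]
  refine Nat.div_le_div_right (hc (Fin.le_def.2 (Nat.sub_le_sub_right ?_ 1)))
  exact Nat.mul_le_mul_left _ (by simpa using hqq')

lemma DiagMonotone.min_add_le (hmono : Monotone c) (hc : DiagMonotone n c) {i : Fin n}
    (hi : 0 < c i) (d : ℕ) (hd : i + d < n) : min n (c i + d) ≤ c ⟨i + d, hd⟩ := by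
  induction d with
  | zero => simp
  | succ d ih =>
    have hd' : i + d < n := by omega
    have hcd := ih hd'
    have hid : c i ≤ c ⟨i + d, hd'⟩ := hmono (Fin.le_def.2 (by simp))
    have hstep : c ⟨i + d, hd'⟩ ≤ c ⟨i + (d + 1), hd⟩ := hmono (Fin.le_def.2 (by simp))
    by_cases hlt : c ⟨i + d, hd'⟩ < n
    · have hsucc : c ⟨i + d, hd'⟩ < c ⟨i + (d + 1), hd⟩ := hc ⟨i + d, hd'⟩ hd (by omega) hlt
      omega
    · omega

theorem IsPMonotone.add_pow_pHeight_mul_le (hp : 1 < p) (hmono : Monotone c)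
    (hc : IsPMonotone p n c) {i j : Fin n} (hij : i ≤ j) (hi : 0 < c i) (hj : c j < n) :
    c i + p ^ pHeight p n c * (j / p ^ pHeight p n c - i / p ^ pHeight p n c) ≤ c j := by
  have hci := apply_eq_pow_pHeight_mul_pContraction (c := c) hp i
  have hcj := apply_eq_pow_pHeight_mul_pContraction (c := c) hp j
  have hPn := Nat.mul_div_cancel' (heightOK_pHeight (c := c) hp i.pos).1
  have hqij := Nat.div_le_div_right (c := p ^ pHeight p n c) hij
  have hchain := DiagMonotone.min_add_le (pContraction_mono (Nat.zero_lt_of_lt hp) hmono) hc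
    (i := ⟨i / p ^ pHeight p n c, div_pow_pHeight_lt hp i⟩) (Nat.pos_of_mul_pos_left (hci ▸ hi))
    (j / p ^ pHeight p n c - i / p ^ pHeight p n c)
    (by simpa [Nat.add_sub_cancel' hqij] using div_pow_pHeight_lt hp j)
  simp only [Nat.add_sub_cancel' hqij] at hchain
  rw [hcj] at hj
  conv_rhs at hj => rw [← hPn]
  have hj' := Nat.lt_of_mul_lt_mul_left hj
  rw [hci, hcj, ← mul_add]
  exact Nat.mul_le_mul_left _ (by omega)

end FerrersDiagram

section Sbar

variable {F L : Type*} [Field F] [Field L] [Algebra F L]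

lemma sbar_apply (τ : L ≃ₐ[F] L) (x : L) : sbar τ x = τ x - x := rfl

lemma sbar_mul (τ : L ≃ₐ[F] L) (x y : L) : sbar τ (x * y) = τ x * sbar τ y + sbar τ x * y := by
  simp only [sbar_apply, map_mul]
  ring

lemma sbar_pow_apply_apply (τ : L ≃ₐ[F] L) (k : ℕ) (x : L) :
    (sbar τ ^ k) (τ x) = τ ((sbar τ ^ k) x) := by
  have hcomm : Commute (sbar τ) τ.toLinearMap :=
    (Commute.refl _).sub_left (Commute.one_left τ.toLinearMap)
  exact LinearMap.congr_fun (hcomm.pow_left k).eq x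

theorem sbar_pow_add_add_one_mul_eq_zero (τ : L ≃ₐ[F] L) {a b : ℕ} {x y : L}
    (hx : (sbar τ ^ (a + 1)) x = 0) (hy : (sbar τ ^ (b + 1)) y = 0) :
    (sbar τ ^ (a + b + 1)) (x * y) = 0 := by
  obtain ⟨s, hs⟩ : ∃ s, a + b = s := ⟨_, rfl⟩
  induction s generalizing a b x y with
  | zero =>
    obtain ⟨rfl, rfl⟩ : a = 0 ∧ b = 0 := by omega
    simp only [zero_add, pow_one] at hx hy ⊢
    rw [sbar_mul, hx, hy, mul_zero, zero_mul, add_zero]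
  | succ s ih =>
    have hτx : (sbar τ ^ (a + 1)) (τ x) = 0 := by rw [sbar_pow_apply_apply, hx, map_zero]
    have hleft : (sbar τ ^ (a + b)) (τ x * sbar τ y) = 0 := by
      rcases b with _ | b
      · rw [zero_add, pow_one] at hy
        rw [hy, mul_zero, map_zero]
      · rw [pow_succ, Module.End.mul_apply] at hy
        rw [← add_assoc]
        exact ih hτx hy (by omega)
    have hright : (sbar τ ^ (a + b)) (sbar τ x * y) = 0 := by
      rcases a with _ | a
      · rw [zero_add, pow_one] at hx
        rw [hx, zero_mul, map_zero]
      · rw [pow_succ, Module.End.mul_apply] at hx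
        rw [add_right_comm]
        exact ih hx hy (by omega)
    rw [pow_succ, Module.End.mul_apply, sbar_mul, map_add, hleft, hright, add_zero]

theorem sbar_pow_char_pow {p : ℕ} (hp : p.Prime) [CharP F p] (σ : L ≃ₐ[F] L) (h : ℕ) :
    sbar σ ^ p ^ h = sbar (σ ^ p ^ h) := by
  have := Fact.mk hp
  have : CharP (Module.End F L) p := charP_of_injective_algebraMap' F p
  rw [sbar, sbar, ← Module.End.one_eq_id, sub_pow_char_pow_of_commute p h (Commute.one_right _),
    one_pow, AlgEquiv.pow_toLinearMap]

theorem sbar_pow_mul_mul_eq_zero {p : ℕ} (hp : p.Prime) [CharP F p] (σ : L ≃ₐ[F] L) (h : ℕ)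
    {a b : ℕ} {x y : L} (hx : (sbar σ ^ (p ^ h * (a + 1))) x = 0)
    (hy : (sbar σ ^ (p ^ h * (b + 1))) y = 0) :
    (sbar σ ^ (p ^ h * (a + b + 1))) (x * y) = 0 := by
  rw [pow_mul, sbar_pow_char_pow hp] at *
  exact sbar_pow_add_add_one_mul_eq_zero _ hx hy

end Sbar

section CompatibleBasis

variable {n : ℕ} {F V : Type*} [Field F] [AddCommGroup V] [Module F V]

/-- The paper's `F`-compatible bases, for `D = sbar σ`. -/
def Module.Basis.IsCompatible (B : Basis (Fin n) F V) (D : V →ₗ[F] V) : Prop :=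
  ∀ k ≤ n, span F (B '' {j | (j : ℕ) < k}) = LinearMap.ker (D ^ k)

namespace Module.Basis.IsCompatible

variable {B : Basis (Fin n) F V} {D : V →ₗ[F] V}

lemma pow_eq_zero (hB : B.IsCompatible D) : D ^ n = 0 := by
  refine LinearMap.ker_eq_top.1 ?_
  rw [← hB n le_rfl, ← B.span_eq, ← Set.image_univ]
  congr
  exact Set.eq_univ_of_forall Fin.isLt

lemma pow_add_one_apply_self (hB : B.IsCompatible D) (j : Fin n) :
    (D ^ ((j : ℕ) + 1)) (B j) = 0 := by
  rw [← LinearMap.mem_ker, ← hB _ j.isLt]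
  exact subset_span ⟨j, Nat.lt_succ_self j, rfl⟩

lemma pow_apply_self_ne_zero (hB : B.IsCompatible D) (j : Fin n) : (D ^ (j : ℕ)) (B j) ≠ 0 := by
  rw [ne_eq, ← LinearMap.mem_ker, ← hB _ j.isLt.le]
  exact B.linearIndependent.notMem_span_image (lt_irrefl (j : ℕ))

lemma pow_apply_eq_zero_iff (hB : B.IsCompatible D) {k : ℕ} (hk : k ≤ n) (x : V) :
    (D ^ k) x = 0 ↔ ∀ i : Fin n, k ≤ i → B.repr x i = 0 := by
  rw [← LinearMap.mem_ker, ← hB k hk, B.mem_span_image]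
  simp only [Set.subset_def, Finset.mem_coe, Finsupp.mem_support_iff, Set.mem_ofPred_eq]
  exact forall_congr' fun i => by rw [← not_le, not_imp_not]

lemma toMatrix_eq_zero_iff (hB : B.IsCompatible D) {c : Fin n → ℕ} (hc : ∀ j, c j ≤ n)
    (f : V →ₗ[F] V) :
    (∀ i j : Fin n, c j ≤ (i : ℕ) → LinearMap.toMatrix B B f i j = 0) ↔
      ∀ j, f (B j) ∈ LinearMap.ker (D ^ c j) := by
  simp only [LinearMap.toMatrix_apply, LinearMap.mem_ker, hB.pow_apply_eq_zero_iff (hc _)]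
  exact forall_comm

end Module.Basis.IsCompatible

end CompatibleBasis

section SumMulPow

variable {n : ℕ} {F L : Type*} [Field F] [Ring L] [Algebra F L]

/-- For `D = sbar σ`, the image of `∏ i, ker (D ^ c i)` is the paper's `L[σ;D]`. -/
def sumMulPow (D : L →ₗ[F] L) : (Fin n → L) →ₗ[F] L →ₗ[F] L where
  toFun v := ∑ i, LinearMap.mul F L (v i) ∘ₗ D ^ (i : ℕ)
  map_add' v w := by simp only [Pi.add_apply, map_add, LinearMap.add_comp, Finset.sum_add_distrib]
  map_smul' r v := by simp only [Pi.smul_apply, map_smul, LinearMap.smul_comp, Finset.smul_sum,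
    RingHom.id_apply]

lemma sumMulPow_apply (D : L →ₗ[F] L) (v : Fin n → L) (x : L) :
    sumMulPow D v x = ∑ i, v i * (D ^ (i : ℕ)) x := by
  simp [sumMulPow]

theorem sumMulPow_injective [NoZeroDivisors L] {D : L →ₗ[F] L} {B : Basis (Fin n) F L}
    (hB : B.IsCompatible D) : Function.Injective (sumMulPow (n := n) D) := by
  refine (injective_iff_map_eq_zero _).2 fun v hv => funext fun i => ?_
  induction i using WellFoundedLT.induction with
  | _ i ih =>
    have hvi := LinearMap.congr_fun hv (B i)
    rw [sumMulPow_apply, Finset.sum_eq_single i] at hvi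
    · exact (mul_eq_zero.1 hvi).resolve_right (hB.pow_apply_self_ne_zero i)
    · intro t _ hti
      rcases lt_or_gt_of_ne hti with hlt | hgt
      · rw [ih t hlt, Pi.zero_apply, zero_mul]
      · rw [Module.End.pow_map_zero_of_le hgt (hB.pow_add_one_apply_self i), mul_zero]
    · simp

theorem exists_sumMulPow_eq_iff [NoZeroDivisors L] {D : L →ₗ[F] L} {B : Basis (Fin n) F L}
    (hB : B.IsCompatible D) {c : Fin n → ℕ}
    (hmaps : ∀ v : Fin n → L, (∀ i, v i ∈ LinearMap.ker (D ^ c i)) →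
      ∀ j, sumMulPow D v (B j) ∈ LinearMap.ker (D ^ c j))
    (f : L →ₗ[F] L) :
    (∃ v : Fin n → L, (∀ i, v i ∈ LinearMap.ker (D ^ c i)) ∧ sumMulPow D v = f) ↔
      ∀ j, f (B j) ∈ LinearMap.ker (D ^ c j) := by
  have := Module.Finite.of_basis B
  set V := Submodule.pi Set.univ fun i => LinearMap.ker (D ^ c i)
  set E : (Fin n → L) ≃ₗ[F] L →ₗ[F] L := B.constr F
  have hle : V.map (sumMulPow D) ≤ V.map (E : (Fin n → L) →ₗ[F] L →ₗ[F] L) := by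
    rintro _ ⟨v, hv, rfl⟩
    exact ⟨_, fun j _ => hmaps v (fun i => hv i trivial) j, B.constr_self F _⟩
  have heq := Submodule.eq_of_le_of_finrank_eq hle (by
    rw [LinearEquiv.finrank_map_eq,
      ← (Submodule.equivMapOfInjective _ (sumMulPow_injective hB) V).finrank_eq])
  have hf := SetLike.ext_iff.1 heq f
  simpa [Submodule.mem_map_equiv, E, Basis.constr_symm_apply, V] using hf

end SumMulPow

section LSigmaD

variable {p n : ℕ} {F L : Type*} [Field F] [Field L] [Algebra F L] [CharP F p]
  {σ : L ≃ₐ[F] L} {c : Fin n → ℕ}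

theorem mul_mem_ker_sbar_pow (hp : p.Prime) (hferr : IsFerrersDiagram n c)
    (hmon : IsPMonotone p n c) (hnil : sbar σ ^ n = 0) {i j : Fin n} {x y : L}
    (hx : (sbar σ ^ c i) x = 0) (hy : (sbar σ ^ ((j : ℕ) + 1 - i)) y = 0) :
    (sbar σ ^ c j) (x * y) = 0 := by
  rcases (hferr.2 j).lt_or_eq with hj | hj
  swap
  · rw [hj, hnil, LinearMap.zero_apply]
  rcases lt_or_ge j i with hji | hij
  · rw [Nat.sub_eq_zero_of_le (by omega), pow_zero, Module.End.one_apply] at hy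
    rw [hy, mul_zero, map_zero]
  rcases (c i).eq_zero_or_pos with hi | hi
  · rw [hi, pow_zero, Module.End.one_apply] at hx
    rw [hx, zero_mul, map_zero]
  set P := p ^ pHeight p n c
  obtain ⟨a, ha⟩ : ∃ a, c i = P * (a + 1) := by
    obtain ⟨k, hk⟩ := (heightOK_pHeight (c := c) hp.one_lt i.pos).2.1 i
    exact ⟨k - 1, by rw [hk, Nat.sub_add_cancel (Nat.pos_of_mul_pos_left (hk ▸ hi))]⟩
  have hgrowth := hmon.add_pow_pHeight_mul_le hp.one_lt hferr.1 hij hi hj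
  have hxy := sbar_pow_mul_mul_eq_zero hp σ (pHeight p n c) (ha ▸ hx)
    (Module.End.pow_map_zero_of_le (Nat.add_one_sub_le_mul_div_sub_div (pow_pos hp.pos _) hij) hy)
  refine Module.End.pow_map_zero_of_le ?_ hxy
  rw [add_right_comm, mul_add, ← ha]
  exact hgrowth

theorem sumMulPow_sbar_apply_mem_ker (hp : p.Prime) (hferr : IsFerrersDiagram n c)
    (hmon : IsPMonotone p n c) {B : Basis (Fin n) F L} (hB : B.IsCompatible (sbar σ))
    (v : Fin n → L) (hv : ∀ i, v i ∈ LinearMap.ker (sbar σ ^ c i)) (j : Fin n) :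
    sumMulPow (sbar σ) v (B j) ∈ LinearMap.ker (sbar σ ^ c j) := by
  rw [sumMulPow_apply]
  refine Submodule.sum_mem _ fun i _ => mul_mem_ker_sbar_pow hp hferr hmon hB.pow_eq_zero (hv i) ?_
  rw [← Module.End.mul_apply, ← pow_add]
  exact Module.End.pow_map_zero_of_le (by omega) (hB.pow_add_one_apply_self j)

end LSigmaD

theorem statement6_general {p m : ℕ} (hp : p.Prime)
    {F L : Type*} [Field F] [Field L] [Algebra F L] [CharP F p]
    (σ : L ≃ₐ[F] L)
    (c : Fin (p ^ m) → ℕ) (hferr : IsFerrersDiagram (p ^ m) c)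
    (hmon : IsPMonotone p (p ^ m) c)
    (B : Module.Basis (Fin (p ^ m)) F L)
    (hB : ∀ k : ℕ, k ≤ p ^ m →
      Submodule.span F (⇑B '' {j : Fin (p ^ m) | (j : ℕ) < k}) =
        LinearMap.ker (sbar σ ^ k)) :
    (fun f : L →ₗ[F] L => LinearMap.toMatrix B B f) ''
        {f : L →ₗ[F] L | ∃ lam : Fin (p ^ m) → L,
          (∀ i, lam i ∈ LinearMap.ker (sbar σ ^ c i)) ∧
          ∀ x : L, f x = ∑ i : Fin (p ^ m), lam i * (sbar σ ^ (i : ℕ)) x} =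
      {A : Matrix (Fin (p ^ m)) (Fin (p ^ m)) F |
        ∀ i j : Fin (p ^ m), c j ≤ (i : ℕ) → A i j = 0} := by
  have hB' : B.IsCompatible (sbar σ) := hB
  convert Set.image_preimage_eq _ (LinearMap.toMatrix B B).surjective using 2
  ext f
  rw [Set.mem_preimage, Set.mem_ofPred_eq, Set.mem_ofPred_eq, hB'.toMatrix_eq_zero_iff hferr.2,
    ← exists_sumMulPow_eq_iff hB' (sumMulPow_sbar_apply_mem_ker hp hferr hmon hB')]
  simp only [LinearMap.ext_iff, sumMulPow_apply, eq_comm]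

/-- for a `p`-monotone Ferrers diagram `D` of order `n = p^m` and an
`F`-compatible basis `B` of `L` (i.e. `span_F(β_1,…,β_k) = F_k` for all `k`), the map
sending `f ∈ L[σ;D]` to its matrix with respect to `B` is an `F`-linear isomorphism
from `L[σ;D]` onto `F^D`; equivalently (the map being linear and injective), the image
of `L[σ;D]` under `f ↦ toMatrix B B f` is exactly `F^D`. -/
theorem statement6 {p m : ℕ} (hp : p.Prime) (hm : 1 ≤ m)
    {F L : Type*} [Field F] [Field L] [Algebra F L] [IsGalois F L] [FiniteDimensional F L]
    [CharP F p] (hn : Module.finrank F L = p ^ m)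
    (σ : L ≃ₐ[F] L) (hσ : ∀ τ : L ≃ₐ[F] L, τ ∈ Subgroup.zpowers σ)
    (c : Fin (p ^ m) → ℕ) (hferr : IsFerrersDiagram (p ^ m) c)
    (hmon : IsPMonotone p (p ^ m) c)
    (B : Module.Basis (Fin (p ^ m)) F L)
    (hB : ∀ k : ℕ, k ≤ p ^ m →
      Submodule.span F (⇑B '' {j : Fin (p ^ m) | (j : ℕ) < k}) =
        LinearMap.ker (sbar σ ^ k)) :
    (fun f : L →ₗ[F] L => LinearMap.toMatrix B B f) ''
        {f : L →ₗ[F] L | ∃ lam : Fin (p ^ m) → L,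
          (∀ i, lam i ∈ LinearMap.ker (sbar σ ^ c i)) ∧
          ∀ x : L, f x = ∑ i : Fin (p ^ m), lam i * (sbar σ ^ (i : ℕ)) x} =
      {A : Matrix (Fin (p ^ m)) (Fin (p ^ m)) F |
        ∀ i j : Fin (p ^ m), c j ≤ (i : ℕ) → A i j = 0} :=
  statement6_general hp σ c hferr hmon B hB
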